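/- For α ≥ 4, the supremum of v_α(x) = [α/((α−1)4^{α−1})]·(1/x)·[(1+x)^{α−1} − (1−3x)^{α−1}] over x ∈ (0, 1/3] is strictly smaller than the infimum of u_α(y) = [α/((α−1)3^{α−1})]·(1/y)·[(1+y)^{α−1} − (1−2y)^{α−1}] over y ∈ (0, 1/2]. -/

import Mathlib

/-!
Write `p = α - 1`, `F(x) = (1 + x)^p - (1 - 3x)^p` and `G(y) = (1 + y)^p - (1 - 2y)^p`, so that
`v_α(x) = α / (p 4^p) · F(x)/x` and `u_α(y) = α / (p 3^p) · G(y)/y`.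

Upper bound: `F(x) ≤ max(4p, 3 (4/3)^p) · x` on `[0, 1/3]`. Near `0` this is `F' ≤ 4p`, true
because `F'/p = (1+t)^{p-1} + 3(1-3t)^{p-1}` is convex and `≤ 4` at both ends of
`[0, 1/(2(p-1))]` (the right end by `1 + s ≤ exp s`). Beyond that point `(1 + x)^p` is convex and
lies below the line `max(4p, 3 (4/3)^p) · x` at both ends of `[1/(2(p-1)), 1/3]`.

Lower bound: `G(y) ≥ m y`. Near `0`, Bernoulli's inequality applied to `G'` gives
`G(y) ≥ 3py - 3/2 p(p-1) y²`; beyond `y₀ = 3/(2p+1)` the chord bound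
`b^p - a^p ≥ b^{p-1}(b - a)` gives `G(y) ≥ 3(1 + y₀)^{p-1} y`.

The two constants are then compared using `(4/3)^p ≥ 16/27 (p + 1)`, again by Bernoulli.
-/

noncomputable section

/-- The function u_α. -/
def uFun (α : ℝ) (y : ℝ) : ℝ :=
  α / ((α - 1) * (3:ℝ) ^ (α - 1)) * (1/y) * ((1 + y) ^ (α - 1) - (1 - 2*y) ^ (α - 1))

/-- The function v_α. -/
def vFun (α : ℝ) (x : ℝ) : ℝ :=
  α / ((α - 1) * (4:ℝ) ^ (α - 1)) * (1/x) * ((1 + x) ^ (α - 1) - (1 - 3*x) ^ (α - 1))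

open Real Set

-- `F = rpowGap 3 p` and `G = rpowGap 2 p`.
def rpowGap (c p t : ℝ) : ℝ := (1 + t) ^ p - (1 - c * t) ^ p

-- `F'(0) = 4p`, and `3 (4/3)^p` is the secant slope of `F` over `[0, 1/3]`.
def vBound (p : ℝ) : ℝ := max (4 * p) (3 * (4 / 3 : ℝ) ^ p)

-- The tangent bound for `y ≤ 3/(2p+1)` and the chord bound beyond.
def uBound (p : ℝ) : ℝ :=
  min (3 * p * (p + 5) / (4 * p + 2)) (3 * (1 + 3 / (2 * p + 1)) ^ (p - 1))

section

variable {p : ℝ}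

theorem image_le_of_hasDerivAt_le {f f' B B' : ℝ → ℝ} {a b : ℝ}
    (hf : ∀ x, HasDerivAt f (f' x) x) (hB : ∀ x, HasDerivAt B (B' x) x) (ha : f a ≤ B a)
    (bound : ∀ x ∈ Ico a b, f' x ≤ B' x) {x : ℝ} (hx : x ∈ Icc a b) : f x ≤ B x :=
  image_le_of_deriv_right_le_deriv_boundary
    (fun x _ => (hf x).continuousAt.continuousWithinAt) (fun x _ => (hf x).hasDerivWithinAt) ha
    (fun x _ => (hB x).continuousAt.continuousWithinAt) (fun x _ => (hB x).hasDerivWithinAt)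
    bound hx

theorem convexOn_rpow_affine (hp : 1 ≤ p) (a b : ℝ) :
    ConvexOn ℝ {t | 0 ≤ a + b * t} fun t => (a + b * t) ^ p :=
  (convexOn_rpow hp).comp_affineMap (AffineMap.const ℝ ℝ a + b • AffineMap.id ℝ ℝ)

theorem one_add_rpow_le_exp_mul {x q : ℝ} (hx : -1 ≤ x) (hq : 0 ≤ q) :
    (1 + x) ^ q ≤ exp (x * q) := by
  rw [exp_mul]
  exact rpow_le_rpow (by linarith) (by linarith [add_one_le_exp x]) hq

theorem exp_half_le_two : exp (1 / 2) ≤ 2 := by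
  have h : exp (1 / 2) * exp (1 / 2) = exp 1 := by rw [← exp_add]; norm_num
  nlinarith [exp_pos (1 / 2), exp_one_lt_d9]

theorem exp_neg_three_halves_le_two_fifths : exp (-(3 / 2)) ≤ 2 / 5 := by
  rw [exp_neg, inv_le_comm₀ (exp_pos _) (by norm_num)]
  linarith [add_one_le_exp (3 / 2)]

theorem hasDerivAt_rpowGap (c : ℝ) (hp : 1 ≤ p) (t : ℝ) :
    HasDerivAt (rpowGap c p) (p * ((1 + t) ^ (p - 1) + c * (1 - c * t) ^ (p - 1))) t := by
  have h1 := ((hasDerivAt_id t).const_add 1).rpow_const (p := p) (Or.inr hp)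
  have h2 := (((hasDerivAt_id t).const_mul c).const_sub 1).rpow_const (p := p) (Or.inr hp)
  exact (h1.sub h2).congr_deriv (by simp only [id]; ring)

theorem rpowGap_zero (c p : ℝ) : rpowGap c p 0 = 0 := by
  simp [rpowGap]

theorem one_add_rpow_add_three_mul_one_sub_rpow_le_four {q t : ℝ} (hq : 3 / 2 ≤ q)
    (ht : t ∈ Icc 0 (1 / (2 * q))) : (1 + t) ^ q + 3 * (1 - 3 * t) ^ q ≤ 4 := by
  set x₀ := 1 / (2 * q) with hx₀
  have hx₀_pos : 0 < x₀ := by positivity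
  have hx₀_le : x₀ ≤ 1 / 3 := by
    rw [hx₀, div_le_div_iff₀ (by linarith) (by norm_num)]; linarith
  have hconv : ConvexOn ℝ (Icc 0 x₀) fun t => (1 + t) ^ q + 3 * (1 - 3 * t) ^ q := by
    have h1 := (convexOn_rpow_affine (p := q) (by linarith) 1 1).subset
      (fun t ht => show 0 ≤ 1 + 1 * t by linarith [ht.1]) (convex_Icc 0 x₀)
    have h2 := (convexOn_rpow_affine (p := q) (by linarith) 1 (-3)).subset
      (fun t ht => show 0 ≤ 1 + -3 * t by linarith [ht.2]) (convex_Icc 0 x₀)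
    refine (h1.add (h2.smul (show (0 : ℝ) ≤ 3 by norm_num))).congr fun t _ => ?_
    simp only [Pi.add_apply, smul_eq_mul, one_mul, neg_mul, ← sub_eq_add_neg]
  have hright : (1 + x₀) ^ q + 3 * (1 - 3 * x₀) ^ q ≤ 4 := by
    have e1 : (1 + x₀) ^ q ≤ 2 := by
      refine (one_add_rpow_le_exp_mul (by linarith) (by linarith)).trans ?_
      rw [show x₀ * q = 1 / 2 by rw [hx₀]; field_simp]
      exact exp_half_le_two
    have e2 : (1 - 3 * x₀) ^ q ≤ 2 / 5 := by
      rw [sub_eq_add_neg]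
      refine (one_add_rpow_le_exp_mul (by linarith) (by linarith)).trans ?_
      rw [show -(3 * x₀) * q = -(3 / 2) by rw [hx₀]; field_simp]
      exact exp_neg_three_halves_le_two_fifths
    linarith
  have hleft : (1 + 0) ^ q + 3 * (1 - 3 * 0) ^ q = (4 : ℝ) := by norm_num
  refine (hconv.le_on_segment (left_mem_Icc.2 hx₀_pos.le) (right_mem_Icc.2 hx₀_pos.le)
    (by rwa [segment_eq_Icc hx₀_pos.le])).trans ?_
  exact max_le hleft.le hright

theorem rpowGap_three_le_mul (hp : 5 / 2 ≤ p) {x : ℝ} (hx : x ∈ Icc 0 (1 / (2 * (p - 1)))) :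
    rpowGap 3 p x ≤ 4 * p * x := by
  refine image_le_of_hasDerivAt_le (hasDerivAt_rpowGap 3 (by linarith))
    (fun t => (hasDerivAt_id t).const_mul (4 * p)) (by simp [rpowGap_zero]) (fun t ht => ?_) hx
  have h := one_add_rpow_add_three_mul_one_sub_rpow_le_four (q := p - 1) (by linarith)
    (Ico_subset_Icc_self ht)
  simp only [mul_one]
  nlinarith

theorem one_add_rpow_le_mul {c x : ℝ} (hp : 5 / 2 ≤ p) (hc₁ : 4 * p ≤ c)
    (hc₂ : 3 * (4 / 3 : ℝ) ^ p ≤ c) (hx : x ∈ Icc (1 / (2 * (p - 1))) (1 / 3)) :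
    (1 + x) ^ p ≤ c * x := by
  set x₀ := 1 / (2 * (p - 1)) with hx₀
  have hx₀_pos : 0 < x₀ := by rw [hx₀]; exact div_pos one_pos (by linarith)
  have hx₀_le : x₀ ≤ 1 / 3 := hx.1.trans hx.2
  have hx₀p : x₀ * (p - 1) = 1 / 2 := by rw [hx₀]; field_simp [show p - 1 ≠ 0 by linarith]
  have hconv : ConvexOn ℝ (Icc x₀ (1 / 3)) fun t => (1 + t) ^ p - c * t := by
    have h1 := (convexOn_rpow_affine (p := p) (by linarith) 1 1).subset
      (fun t ht => show 0 ≤ 1 + 1 * t by linarith [ht.1]) (convex_Icc x₀ (1 / 3))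
    have h2 := (concaveOn_id (convex_Icc x₀ (1 / 3))).smul (show (0 : ℝ) ≤ c by linarith)
    refine (h1.sub h2).congr fun t _ => ?_
    simp
  have hleft : (1 + x₀) ^ p - c * x₀ ≤ 0 := by
    have h2 : (1 + x₀) ^ (p - 1) ≤ 2 := by
      refine (one_add_rpow_le_exp_mul (by linarith) (by linarith)).trans ?_
      rw [hx₀p]
      exact exp_half_le_two
    have e : (1 + x₀) ^ p = (1 + x₀) ^ (p - 1) * (1 + x₀) := by
      rw [← rpow_add_one (by linarith)]; ring_nf
    nlinarith
  have hright : (1 + 1 / 3 : ℝ) ^ p - c * (1 / 3) ≤ 0 := by norm_num; linarith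
  have := hconv.le_on_segment (left_mem_Icc.2 hx₀_le) (right_mem_Icc.2 hx₀_le)
    (by rwa [segment_eq_Icc hx₀_le])
  linarith [max_le hleft hright]

theorem rpowGap_three_le_vBound_mul (hp : 5 / 2 ≤ p) {x : ℝ} (hx : x ∈ Icc 0 (1 / 3)) :
    rpowGap 3 p x ≤ vBound p * x := by
  rcases le_total x (1 / (2 * (p - 1))) with hx₀ | hx₀
  · exact (rpowGap_three_le_mul hp ⟨hx.1, hx₀⟩).trans
      (mul_le_mul_of_nonneg_right (le_max_left _ _) hx.1)
  · have h := one_add_rpow_le_mul hp (le_max_left _ _) (le_max_right _ _) ⟨hx₀, hx.2⟩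
    have : 0 ≤ (1 - 3 * x) ^ p := rpow_nonneg (by linarith [hx.2]) p
    rw [rpowGap, vBound]
    linarith

theorem mul_sub_le_rpowGap_two (hp : 2 ≤ p) {y : ℝ} (hy : y ∈ Icc 0 (1 / 2)) :
    3 * p * y - 3 / 2 * p * (p - 1) * y ^ 2 ≤ rpowGap 2 p y := by
  have hquad : ∀ t, HasDerivAt (fun t => 3 * p * t - 3 / 2 * p * (p - 1) * t ^ 2)
      (3 * p - 3 * p * (p - 1) * t) t := fun t =>
    (((hasDerivAt_id t).const_mul (3 * p)).sub
      ((hasDerivAt_pow 2 t).const_mul (3 / 2 * p * (p - 1)))).congr_deriv (by push_cast; ring)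
  refine image_le_of_hasDerivAt_le hquad (hasDerivAt_rpowGap 2 (by linarith))
    (by simp [rpowGap_zero]) (fun t ht => ?_) hy
  have h1 : 1 + (p - 1) * t ≤ (1 + t) ^ (p - 1) :=
    one_add_mul_self_le_rpow_one_add (by linarith [ht.1]) (by linarith)
  have h2 : 1 + (p - 1) * -(2 * t) ≤ (1 - 2 * t) ^ (p - 1) := by
    rw [sub_eq_add_neg]
    exact one_add_mul_self_le_rpow_one_add (by linarith [ht.2]) (by linarith)
  nlinarith

theorem rpow_sub_one_mul_sub_le_rpow_sub_rpow {a b : ℝ} (ha : 0 ≤ a) (hab : a ≤ b)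
    (hp : 1 ≤ p) :
    b ^ (p - 1) * (b - a) ≤ b ^ p - a ^ p := by
  have hsplit : ∀ x : ℝ, 0 ≤ x → x ^ p = x ^ (p - 1) * x := fun x hx => by
    conv_lhs => rw [show p = p - 1 + 1 by ring]
    rw [rpow_add' hx (by linarith), rpow_one]
  have : a ^ (p - 1) ≤ b ^ (p - 1) := rpow_le_rpow ha hab (by linarith)
  rw [hsplit a ha, hsplit b (ha.trans hab)]
  nlinarith

theorem uBound_mul_le_rpowGap_two (hp : 2 ≤ p) {y : ℝ} (hy : y ∈ Icc 0 (1 / 2)) :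
    uBound p * y ≤ rpowGap 2 p y := by
  set y₀ := 3 / (2 * p + 1) with hy₀
  rcases le_total y y₀ with hyy₀ | hyy₀
  · have hA : 3 * p * (p + 5) / (4 * p + 2) * y ≤ 3 * p * y - 3 / 2 * p * (p - 1) * y ^ 2 := by
      have e : 3 * p * (p + 5) / (4 * p + 2) = 3 * p - 3 / 2 * p * (p - 1) * y₀ := by
        rw [hy₀]; field_simp; ring
      rw [e]
      have : 0 ≤ p * (p - 1) * (y * (y₀ - y)) :=
        mul_nonneg (by nlinarith) (mul_nonneg hy.1 (by linarith))
      nlinarith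
    exact (mul_le_mul_of_nonneg_right (min_le_left _ _) hy.1).trans
      (hA.trans (mul_sub_le_rpowGap_two hp hy))
  · have hchord := rpow_sub_one_mul_sub_le_rpow_sub_rpow (a := 1 - 2 * y) (b := 1 + y)
      (by linarith [hy.2]) (by linarith [hy.1]) (show 1 ≤ p by linarith)
    have hmono : (1 + y₀) ^ (p - 1) ≤ (1 + y) ^ (p - 1) :=
      rpow_le_rpow (by positivity) (by linarith) (by linarith)
    calc uBound p * y ≤ 3 * (1 + y₀) ^ (p - 1) * y :=
          mul_le_mul_of_nonneg_right (min_le_right _ _) hy.1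
      _ ≤ (1 + y) ^ (p - 1) * ((1 + y) - (1 - 2 * y)) := by nlinarith [hy.1]
      _ ≤ rpowGap 2 p y := hchord

theorem vBound_div_lt_uBound_div (hp : 3 ≤ p) : vBound p / 4 ^ p < uBound p / 3 ^ p := by
  suffices key : vBound p < uBound p * (4 / 3 : ℝ) ^ p by
    have h43 : (4 : ℝ) ^ p = (4 / 3 : ℝ) ^ p * 3 ^ p := by
      rw [← mul_rpow (by norm_num) (by norm_num)]; norm_num
    rw [div_lt_div_iff₀ (by positivity) (by positivity), h43, ← mul_assoc]
    exact mul_lt_mul_of_pos_right key (by positivity)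
  have hr : 16 / 27 * (p + 1) ≤ (4 / 3 : ℝ) ^ p := by
    have h := one_add_mul_self_le_rpow_one_add (s := 1 / 3) (by norm_num) (p := p - 2) (by linarith)
    have e : (4 / 3 : ℝ) ^ p = (4 / 3 : ℝ) ^ (2 : ℝ) * (1 + 1 / 3 : ℝ) ^ (p - 2) := by
      rw [show (1 + 1 / 3 : ℝ) = 4 / 3 by norm_num, ← rpow_add (by norm_num)]; ring_nf
    rw [e, show (4 / 3 : ℝ) ^ (2 : ℝ) = 16 / 9 by norm_num]
    nlinarith
  have hy₀ : 0 < 3 / (2 * p + 1) := by positivity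
  have hB : (5 * p - 2) / (2 * p + 1) ≤ (1 + 3 / (2 * p + 1)) ^ (p - 1) := by
    refine le_trans (le_of_eq ?_) (one_add_mul_self_le_rpow_one_add (by linarith) (by linarith))
    field_simp; ring
  have hB₁ : 1 < (1 + 3 / (2 * p + 1)) ^ (p - 1) := one_lt_rpow (by linarith) (by linarith)
  have hr₀ : 0 < (4 / 3 : ℝ) ^ p := by positivity
  rw [vBound, uBound, min_mul_of_nonneg _ _ hr₀.le]
  refine max_lt (lt_min ?_ ?_) (lt_min ?_ ?_)
  -- Nearly tight: at `p = 3` this reads `12 < 36/7 · 64/27`.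
  · rw [div_mul_eq_mul_div, lt_div_iff₀ (by linarith)]
    nlinarith [mul_le_mul_of_nonneg_left hr (by positivity : (0:ℝ) ≤ 3 * p * (p + 5)),
      mul_pos (by linarith : 0 < p) (by nlinarith : 0 < 2 * p ^ 2 - 6 * p + 1)]
  · have hB' : 5 * p - 2 ≤ (1 + 3 / (2 * p + 1)) ^ (p - 1) * (2 * p + 1) :=
      (div_le_iff₀ (by linarith)).1 hB
    nlinarith [mul_le_mul_of_nonneg_right hB' hr₀.le,
      mul_le_mul_of_nonneg_left hr (by linarith : (0:ℝ) ≤ 5 * p - 2)]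
  · refine mul_lt_mul_of_pos_right ?_ hr₀
    rw [lt_div_iff₀ (by linarith)]
    nlinarith
  · nlinarith [mul_lt_mul_of_pos_right hB₁ hr₀]

theorem vFun_le {α x : ℝ} (hα : 7 / 2 ≤ α) (hx : x ∈ Ioc 0 (1 / 3)) :
    vFun α x ≤ α / (α - 1) * (vBound (α - 1) / 4 ^ (α - 1)) := by
  have h := rpowGap_three_le_vBound_mul (p := α - 1) (by linarith) (Ioc_subset_Icc_self hx)
  have e : vFun α x = α / (α - 1) * (rpowGap 3 (α - 1) x / x / 4 ^ (α - 1)) := by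
    simp only [vFun, rpowGap, div_eq_mul_inv, mul_inv]; ring
  rw [e]
  have : 0 < α / (α - 1) := div_pos (by linarith) (by linarith)
  gcongr
  exact div_le_of_le_mul₀ hx.1.le (by unfold vBound; positivity) h

theorem le_uFun {α y : ℝ} (hα : 3 ≤ α) (hy : y ∈ Ioc 0 (1 / 2)) :
    α / (α - 1) * (uBound (α - 1) / 3 ^ (α - 1)) ≤ uFun α y := by
  have h := uBound_mul_le_rpowGap_two (p := α - 1) (by linarith) (Ioc_subset_Icc_self hy)
  have e : uFun α y = α / (α - 1) * (rpowGap 2 (α - 1) y / y / 3 ^ (α - 1)) := by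
    simp only [uFun, rpowGap, div_eq_mul_inv, mul_inv]; ring
  rw [e]
  have : 0 < α / (α - 1) := div_pos (by linarith) (by linarith)
  gcongr
  exact (le_div_iff₀ hy.1).2 h

end

/-- For α ≥ 4, the supremum of v_α on (0,1/3] is strictly smaller than the
    infimum of u_α on (0,1/2]. -/
theorem vFun_sup_lt_uFun_inf (α : ℝ) (hα : 4 ≤ α) :
    sSup (vFun α '' Set.Ioc 0 (1/3)) < sInf (uFun α '' Set.Ioc 0 (1/2)) := by
  calc sSup (vFun α '' Ioc 0 (1 / 3)) ≤ α / (α - 1) * (vBound (α - 1) / 4 ^ (α - 1)) :=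
        csSup_le ((nonempty_Ioc.2 (by norm_num)).image _)
          (forall_mem_image.2 fun x hx => vFun_le (by linarith) hx)
    _ < α / (α - 1) * (uBound (α - 1) / 3 ^ (α - 1)) :=
        mul_lt_mul_of_pos_left (vBound_div_lt_uBound_div (by linarith))
          (div_pos (by linarith) (by linarith))
    _ ≤ sInf (uFun α '' Ioc 0 (1 / 2)) :=
        le_csInf ((nonempty_Ioc.2 (by norm_num)).image _)
          (forall_mem_image.2 fun y hy => le_uFun (by linarith) hy)
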